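/- Let S be a semigroup with finite R-height whose kernel is completely simple, and let B be a bi-ideal of S. Then H_R(B) ≤ 3n − 2, where n is the maximum length of a chain of R-classes of S that intersect B. -/
import Mathlib


/-!
Common definitions: Green's preorder/relation computed inside a subsemigroup,
chains of R-classes, R-height, bi-ideals, one- and two-sided ideals,
the kernel, and completely simple (sub)semigroups.
-/

variable {S : Type*}

/-- Green's preorder `≤_B` computed with multipliers from `B`:
`a ≤_B b` iff `a ∈ bB¹`, i.e. `a = b` or `a = b*s` for some `s ∈ B`. -/
def RLe [Semigroup S] (B : Set S) (a b : S) : Prop :=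
  a = b ∨ ∃ s ∈ B, a = b * s

/-- The strict version `<_B` of Green's preorder. -/
def RLt [Semigroup S] (B : Set S) (a b : S) : Prop :=
  RLe B a b ∧ ¬ RLe B b a

/-- Green's relation `R` computed with multipliers from `B`. -/
def REquiv [Semigroup S] (B : Set S) (a b : S) : Prop :=
  RLe B a b ∧ RLe B b a

/-- There is a chain of `n` (distinct, linearly ordered) `R`-classes of the
subsemigroup `B`, with all representatives lying in `C`. -/
def HasRChain [Semigroup S] (B C : Set S) (n : ℕ) : Prop :=
  ∃ f : Fin n → S, (∀ i, f i ∈ C) ∧ ∀ i j : Fin n, i < j → RLt B (f i) (f j)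

/-- There is a chain of `n` `R`-classes of `S`, each of which is contained in `C`. -/
def HasRChainInside [Semigroup S] (C : Set S) (n : ℕ) : Prop :=
  ∃ f : Fin n → S, (∀ i, ∀ x : S, REquiv Set.univ x (f i) → x ∈ C) ∧
    ∀ i j : Fin n, i < j → RLt (Set.univ : Set S) (f i) (f j)

/-- The `R`-height of the subsemigroup `B`: the supremum of the lengths
(cardinalities) of chains of `R_B`-classes. -/
noncomputable def RHeight [Semigroup S] (B : Set S) : ℕ∞ :=
  sSup ((fun n : ℕ => (n : ℕ∞)) '' {n : ℕ | HasRChain B B n})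

/-- A bi-ideal of `S`: a nonempty subset `B` with `BS¹B ⊆ B`. -/
def IsBiIdeal [Semigroup S] (B : Set S) : Prop :=
  B.Nonempty ∧ ∀ b ∈ B, ∀ c ∈ B, b * c ∈ B ∧ ∀ s : S, b * s * c ∈ B

/-- A right ideal of `S`: a nonempty subset `A` with `AS ⊆ A`. -/
def IsRightIdeal [Semigroup S] (A : Set S) : Prop :=
  A.Nonempty ∧ ∀ a ∈ A, ∀ s : S, a * s ∈ A

/-- A left ideal of `S`: a nonempty subset `A` with `SA ⊆ A`. -/
def IsLeftIdeal [Semigroup S] (A : Set S) : Prop :=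
  A.Nonempty ∧ ∀ a ∈ A, ∀ s : S, s * a ∈ A

/-- A two-sided ideal of `S`. -/
def IsTwoSidedIdealSet [Semigroup S] (A : Set S) : Prop :=
  IsRightIdeal A ∧ IsLeftIdeal A

/-- `K` is the kernel (minimum two-sided ideal) of `S`. -/
def IsKernel [Semigroup S] (K : Set S) : Prop :=
  IsTwoSidedIdealSet K ∧ ∀ A : Set S, IsTwoSidedIdealSet A → K ⊆ A

/-- A right ideal of the subsemigroup `K` of `S`. -/
def IsRightIdealIn [Semigroup S] (K A : Set S) : Prop :=
  A.Nonempty ∧ A ⊆ K ∧ ∀ a ∈ A, ∀ k ∈ K, a * k ∈ A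

/-- A left ideal of the subsemigroup `K` of `S`. -/
def IsLeftIdealIn [Semigroup S] (K A : Set S) : Prop :=
  A.Nonempty ∧ A ⊆ K ∧ ∀ a ∈ A, ∀ k ∈ K, k * a ∈ A

/-- A two-sided ideal of the subsemigroup `K` of `S`. -/
def IsIdealIn [Semigroup S] (K A : Set S) : Prop :=
  IsRightIdealIn K A ∧ IsLeftIdealIn K A

/-- The subsemigroup `K` of `S` is completely simple: it is simple (has no
proper two-sided ideals) and possesses both a minimal right ideal and a
minimal left ideal. -/
def IsCompletelySimple [Semigroup S] (K : Set S) : Prop :=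
  K.Nonempty ∧ (∀ a ∈ K, ∀ b ∈ K, a * b ∈ K) ∧
  (∀ A : Set S, IsIdealIn K A → A = K) ∧
  (∃ A : Set S, IsRightIdealIn K A ∧ ∀ A' : Set S, IsRightIdealIn K A' → A' ⊆ A → A' = A) ∧
  (∃ A : Set S, IsLeftIdealIn K A ∧ ∀ A' : Set S, IsLeftIdealIn K A' → A' ⊆ A → A' = A)


/-! ### Auxiliary lemmas -/

section AuxLemmas

variable {S : Type*} [Semigroup S]

lemma rle_of_rleB {B : Set S} {a b : S} (h : RLe B a b) : RLe (Set.univ : Set S) a b := by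
  rcases h with h | ⟨s, _, h⟩
  · exact Or.inl h
  · exact Or.inr ⟨s, Set.mem_univ s, h⟩

lemma rle_univ_trans {a b c : S} (h1 : RLe (Set.univ : Set S) a b)
    (h2 : RLe (Set.univ : Set S) b c) : RLe (Set.univ : Set S) a c := by
  rcases h1 with h1 | ⟨s, -, h1⟩
  · rcases h2 with h2 | ⟨t, -, h2⟩
    · exact Or.inl (h1.trans h2)
    · exact Or.inr ⟨t, Set.mem_univ t, h1 ▸ h2⟩
  · rcases h2 with h2 | ⟨t, -, h2⟩
    · exact Or.inr ⟨s, Set.mem_univ s, by rw [h1, h2]⟩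
    · exact Or.inr ⟨t * s, Set.mem_univ _, by rw [h1, h2, mul_assoc]⟩

/-- In the completely simple kernel `K`, every element `u` satisfies `u ∈ uK`, and
moreover `v ∈ uK` implies `u ∈ vK` (all `R`-classes of `K` are incomparable). -/
lemma kernel_min_right {K : Set S} (hK : IsKernel K) (hCS : IsCompletelySimple K)
    {u : S} (hu : u ∈ K) :
    (∃ k ∈ K, u = u * k) ∧ ∀ v ∈ K, (∃ k ∈ K, v = u * k) → ∃ k ∈ K, u = v * k := by
  obtain ⟨κ0, hκ0⟩ := hCS.1
  have hmul := hCS.2.1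
  have hsimple := hCS.2.2.1
  obtain ⟨A, hA, hAmin⟩ := hCS.2.2.2.1
  obtain ⟨a0, ha0⟩ := hA.1
  -- `u` lies in a minimal right ideal `C` of `K`
  have hC : ∃ C : Set S, u ∈ C ∧ IsRightIdealIn K C ∧
      ∀ W, IsRightIdealIn K W → W ⊆ C → W = C := by
    have hUsub : (A ∪ {x | ∃ k ∈ K, ∃ a ∈ A, x = k * a}) ⊆ K := by
      rintro x (hx | ⟨k, hk, a, ha, rfl⟩)
      · exact hA.2.1 hx
      · exact hmul k hk a (hA.2.1 ha)
    have hU : IsIdealIn K (A ∪ {x | ∃ k ∈ K, ∃ a ∈ A, x = k * a}) := by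
      constructor
      · refine ⟨⟨a0, Or.inl ha0⟩, hUsub, ?_⟩
        rintro x (hx | ⟨k, hk, a, ha, rfl⟩) κ hκ
        · exact Or.inl (hA.2.2 x hx κ hκ)
        · exact Or.inr ⟨k, hk, a * κ, hA.2.2 a ha κ hκ, mul_assoc k a κ⟩
      · refine ⟨⟨a0, Or.inl ha0⟩, hUsub, ?_⟩
        rintro x (hx | ⟨k, hk, a, ha, rfl⟩) κ hκ
        · exact Or.inr ⟨κ, hκ, x, hx, rfl⟩
        · exact Or.inr ⟨κ * k, hmul κ hκ k hk, a, ha, (mul_assoc κ k a).symm⟩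
    have hUK := hsimple _ hU
    have huU : u ∈ A ∪ {x | ∃ k ∈ K, ∃ a ∈ A, x = k * a} := by rw [hUK]; exact hu
    rcases huU with huA | ⟨k, hk, a, ha, hua⟩
    · exact ⟨A, huA, hA, hAmin⟩
    · refine ⟨{x | ∃ a' ∈ A, x = k * a'}, ⟨a, ha, hua⟩,
        ⟨⟨k * a0, a0, ha0, rfl⟩, ?_, ?_⟩, ?_⟩
      · rintro x ⟨a', ha', rfl⟩
        exact hmul k hk a' (hA.2.1 ha')
      · rintro x ⟨a', ha', rfl⟩ κ hκ
        exact ⟨a' * κ, hA.2.2 a' ha' κ hκ, mul_assoc k a' κ⟩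
      · intro W hW hWC
        have hW' : IsRightIdealIn K {a' | a' ∈ A ∧ k * a' ∈ W} := by
          refine ⟨?_, fun x hx => hA.2.1 hx.1, ?_⟩
          · obtain ⟨w, hw⟩ := hW.1
            obtain ⟨a', ha', rfl⟩ := hWC hw
            exact ⟨a', ha', hw⟩
          · rintro a' ⟨ha', hka'⟩ κ hκ
            exact ⟨hA.2.2 a' ha' κ hκ, by rw [← mul_assoc]; exact hW.2.2 _ hka' κ hκ⟩
        have hWA : {a' | a' ∈ A ∧ k * a' ∈ W} = A := hAmin _ hW' (fun x hx => hx.1)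
        apply Set.Subset.antisymm hWC
        rintro x ⟨a', ha', rfl⟩
        have ha'' : a' ∈ {a' | a' ∈ A ∧ k * a' ∈ W} := by rw [hWA]; exact ha'
        exact ha''.2
  obtain ⟨C, huC, hCri, hCmin⟩ := hC
  have hUKri : IsRightIdealIn K {x | ∃ k ∈ K, x = u * k} := by
    refine ⟨⟨u * κ0, κ0, hκ0, rfl⟩, ?_, ?_⟩
    · rintro x ⟨k, hk, rfl⟩
      exact hmul u hu k hk
    · rintro x ⟨k, hk, rfl⟩ κ hκ
      exact ⟨k * κ, hmul k hk κ hκ, mul_assoc u k κ⟩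
  have hsub : {x | ∃ k ∈ K, x = u * k} ⊆ C := by
    rintro x ⟨k, hk, rfl⟩
    exact hCri.2.2 u huC k hk
  have heqC : {x | ∃ k ∈ K, x = u * k} = C := hCmin _ hUKri hsub
  have huuK : u ∈ {x | ∃ k ∈ K, x = u * k} := by rw [heqC]; exact huC
  refine ⟨huuK, ?_⟩
  intro v hv hvuK
  obtain ⟨k0, hk0, hvk0⟩ := hvuK
  have hvKri : IsRightIdealIn K {x | ∃ k ∈ K, x = v * k} := by
    refine ⟨⟨v * κ0, κ0, hκ0, rfl⟩, ?_, ?_⟩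
    · rintro x ⟨k, hk, rfl⟩
      exact hmul v hv k hk
    · rintro x ⟨k, hk, rfl⟩ κ hκ
      exact ⟨k * κ, hmul k hk κ hκ, mul_assoc v k κ⟩
  have hsub2 : {x | ∃ k ∈ K, x = v * k} ⊆ C := by
    rintro x ⟨k, hk, rfl⟩
    have : v * k = u * (k0 * k) := by rw [hvk0, mul_assoc]
    rw [this]
    exact hsub ⟨k0 * k, hmul k0 hk0 k hk, rfl⟩
  have heqC2 : {x | ∃ k ∈ K, x = v * k} = C := hCmin _ hvKri hsub2
  have : u ∈ {x | ∃ k ∈ K, x = v * k} := by rw [heqC2]; exact huC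
  exact this

/-- Dual of `kernel_min_right`. -/
lemma kernel_min_left {K : Set S} (hK : IsKernel K) (hCS : IsCompletelySimple K)
    {u : S} (hu : u ∈ K) :
    (∃ k ∈ K, u = k * u) ∧ ∀ v ∈ K, (∃ k ∈ K, v = k * u) → ∃ k ∈ K, u = k * v := by
  obtain ⟨κ0, hκ0⟩ := hCS.1
  have hmul := hCS.2.1
  have hsimple := hCS.2.2.1
  obtain ⟨A, hA, hAmin⟩ := hCS.2.2.2.2
  obtain ⟨a0, ha0⟩ := hA.1
  have hC : ∃ C : Set S, u ∈ C ∧ IsLeftIdealIn K C ∧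
      ∀ W, IsLeftIdealIn K W → W ⊆ C → W = C := by
    have hUsub : (A ∪ {x | ∃ k ∈ K, ∃ a ∈ A, x = a * k}) ⊆ K := by
      rintro x (hx | ⟨k, hk, a, ha, rfl⟩)
      · exact hA.2.1 hx
      · exact hmul a (hA.2.1 ha) k hk
    have hU : IsIdealIn K (A ∪ {x | ∃ k ∈ K, ∃ a ∈ A, x = a * k}) := by
      constructor
      · refine ⟨⟨a0, Or.inl ha0⟩, hUsub, ?_⟩
        rintro x (hx | ⟨k, hk, a, ha, rfl⟩) κ hκ
        · exact Or.inr ⟨κ, hκ, x, hx, rfl⟩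
        · exact Or.inr ⟨k * κ, hmul k hk κ hκ, a, ha, mul_assoc a k κ⟩
      · refine ⟨⟨a0, Or.inl ha0⟩, hUsub, ?_⟩
        rintro x (hx | ⟨k, hk, a, ha, rfl⟩) κ hκ
        · exact Or.inl (hA.2.2 x hx κ hκ)
        · exact Or.inr ⟨k, hk, κ * a, hA.2.2 a ha κ hκ, (mul_assoc κ a k).symm⟩
    have hUK := hsimple _ hU
    have huU : u ∈ A ∪ {x | ∃ k ∈ K, ∃ a ∈ A, x = a * k} := by rw [hUK]; exact hu
    rcases huU with huA | ⟨k, hk, a, ha, hua⟩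
    · exact ⟨A, huA, hA, hAmin⟩
    · refine ⟨{x | ∃ a' ∈ A, x = a' * k}, ⟨a, ha, hua⟩,
        ⟨⟨a0 * k, a0, ha0, rfl⟩, ?_, ?_⟩, ?_⟩
      · rintro x ⟨a', ha', rfl⟩
        exact hmul a' (hA.2.1 ha') k hk
      · rintro x ⟨a', ha', rfl⟩ κ hκ
        exact ⟨κ * a', hA.2.2 a' ha' κ hκ, (mul_assoc κ a' k).symm⟩
      · intro W hW hWC
        have hW' : IsLeftIdealIn K {a' | a' ∈ A ∧ a' * k ∈ W} := by
          refine ⟨?_, fun x hx => hA.2.1 hx.1, ?_⟩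
          · obtain ⟨w, hw⟩ := hW.1
            obtain ⟨a', ha', rfl⟩ := hWC hw
            exact ⟨a', ha', hw⟩
          · rintro a' ⟨ha', hka'⟩ κ hκ
            exact ⟨hA.2.2 a' ha' κ hκ, by rw [mul_assoc]; exact hW.2.2 _ hka' κ hκ⟩
        have hWA : {a' | a' ∈ A ∧ a' * k ∈ W} = A := hAmin _ hW' (fun x hx => hx.1)
        apply Set.Subset.antisymm hWC
        rintro x ⟨a', ha', rfl⟩
        have ha'' : a' ∈ {a' | a' ∈ A ∧ a' * k ∈ W} := by rw [hWA]; exact ha'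
        exact ha''.2
  obtain ⟨C, huC, hCri, hCmin⟩ := hC
  have hUKri : IsLeftIdealIn K {x | ∃ k ∈ K, x = k * u} := by
    refine ⟨⟨κ0 * u, κ0, hκ0, rfl⟩, ?_, ?_⟩
    · rintro x ⟨k, hk, rfl⟩
      exact hmul k hk u hu
    · rintro x ⟨k, hk, rfl⟩ κ hκ
      exact ⟨κ * k, hmul κ hκ k hk, (mul_assoc κ k u).symm⟩
  have hsub : {x | ∃ k ∈ K, x = k * u} ⊆ C := by
    rintro x ⟨k, hk, rfl⟩
    exact hCri.2.2 u huC k hk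
  have heqC : {x | ∃ k ∈ K, x = k * u} = C := hCmin _ hUKri hsub
  have huuK : u ∈ {x | ∃ k ∈ K, x = k * u} := by rw [heqC]; exact huC
  refine ⟨huuK, ?_⟩
  intro v hv hvuK
  obtain ⟨k0, hk0, hvk0⟩ := hvuK
  have hvKri : IsLeftIdealIn K {x | ∃ k ∈ K, x = k * v} := by
    refine ⟨⟨κ0 * v, κ0, hκ0, rfl⟩, ?_, ?_⟩
    · rintro x ⟨k, hk, rfl⟩
      exact hmul k hk v hv
    · rintro x ⟨k, hk, rfl⟩ κ hκ
      exact ⟨κ * k, hmul κ hκ k hk, (mul_assoc κ k v).symm⟩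
  have hsub2 : {x | ∃ k ∈ K, x = k * v} ⊆ C := by
    rintro x ⟨k, hk, rfl⟩
    have : k * v = (k * k0) * u := by rw [hvk0, mul_assoc]
    rw [this]
    exact hsub ⟨k * k0, hmul k hk k0 hk0, rfl⟩
  have heqC2 : {x | ∃ k ∈ K, x = k * v} = C := hCmin _ hvKri hsub2
  have : u ∈ {x | ∃ k ∈ K, x = k * v} := by rw [heqC2]; exact huC
  exact this

/-- If `b, c` both lie in `B ∩ K` and `b = c * s`, then `c ∈ b·B`. -/
lemma kernel_pair {K B : Set S} (hK : IsKernel K) (hCS : IsCompletelySimple K)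
    (hB : IsBiIdeal B) {b c s : S} (hbB : b ∈ B) (hcB : c ∈ B)
    (hbK : b ∈ K) (hcK : c ∈ K) (hbcs : b = c * s) :
    ∃ x ∈ B, c = b * x := by
  have hmul := hCS.2.1
  obtain ⟨⟨k, hk, hbk⟩, hG2b⟩ := kernel_min_right hK hCS hbK
  have h1 : b = c * (s * k) := by rw [hbk]; conv_lhs => rw [hbcs]; rw [mul_assoc]
  have hskK : s * k ∈ K := hK.1.2.2 k hk s
  obtain ⟨k1, hk1, hck1⟩ := (kernel_min_right hK hCS hcK).2 b hbK ⟨s * k, hskK, h1⟩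
  obtain ⟨k2, hk2, hbb2⟩ := hG2b (b * b) (hmul b hbK b hbK) ⟨b, hbK, rfl⟩
  obtain ⟨k4, hk4, hck4⟩ := (kernel_min_right hK hCS hcK).1
  obtain ⟨k5, hk5, hk45⟩ := (kernel_min_left hK hCS hk4).2 c hcK ⟨c, hcK, hck4⟩
  have h2 : (b * b) * (k2 * k1) = c := by rw [← mul_assoc, ← hbb2, ← hck1]
  have h3 : b * (b * ((k2 * k1) * k5) * c) = ((b * b) * (k2 * k1)) * (k5 * c) := by
    simp only [mul_assoc]
  have h4 : c = b * (b * ((k2 * k1) * k5) * c) := by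
    rw [h3, h2, ← hk45, ← hck4]
  exact ⟨b * ((k2 * k1) * k5) * c, (hB.2 b hbB c hcB).2 ((k2 * k1) * k5), h4⟩

/-- If `b1 <_B b2` but `b1` and `b2` are `R_S`-equivalent, then some element of `B`
lies strictly `R_S`-below `b1`. -/
lemma below_of_within {K B : Set S} (hK : IsKernel K) (hCS : IsCompletelySimple K)
    (hB : IsBiIdeal B) {b1 b2 : S} (h1B : b1 ∈ B) (h2B : b2 ∈ B)
    (hlt : RLt B b1 b2) (hequiv : RLe (Set.univ : Set S) b2 b1) :
    ∃ c ∈ B, RLt (Set.univ : Set S) c b1 := by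
  by_contra hno
  push_neg at hno
  obtain ⟨κ, hκ⟩ := hCS.1
  have hc0B : b1 * κ * b1 ∈ B := (hB.2 b1 h1B b1 h1B).2 κ
  have hc0K : b1 * κ * b1 ∈ K := hK.1.1.2 _ (hK.1.2.2 κ hκ b1) b1
  have hle : RLe (Set.univ : Set S) (b1 * κ * b1) b1 :=
    Or.inr ⟨κ * b1, Set.mem_univ _, mul_assoc b1 κ b1⟩
  have hb1le : RLe (Set.univ : Set S) b1 (b1 * κ * b1) := by
    by_contra hcon
    exact (hno _ hc0B) ⟨hle, hcon⟩
  have hb1K : b1 ∈ K := by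
    rcases hb1le with heq | ⟨v, -, hv⟩
    · rw [heq]; exact hc0K
    · rw [hv]; exact hK.1.1.2 _ hc0K v
  rcases hlt.1 with heq | ⟨s, hsB, hs⟩
  · exact hlt.2 (Or.inl heq.symm)
  have hb2K : b2 ∈ K := by
    rcases hequiv with heq | ⟨w, -, hw⟩
    · rw [heq]; exact hb1K
    · rw [hw]; exact hK.1.1.2 _ hb1K w
  obtain ⟨x, hxB, hx⟩ := kernel_pair hK hCS hB h1B h2B hb1K hb2K hs
  exact hlt.2 (Or.inr ⟨x, hxB, hx⟩)

/-- The equational lemma killing chains of four within one `R_S`-class. -/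
lemma rle_of_four {B : Set S} (hB : IsBiIdeal B) {b1 b2 b3 b4 s1 s3 : S}
    (hs1 : s1 ∈ B) (hs3 : s3 ∈ B) (e1 : b1 = b2 * s1) (e3 : b3 = b4 * s3)
    (h41 : RLe (Set.univ : Set S) b4 b1) : RLe B b3 b2 := by
  rcases h41 with heq | ⟨w, -, hw⟩
  · refine Or.inr ⟨s1 * s3, (hB.2 s1 hs1 s3 hs3).1, ?_⟩
    rw [e3, heq, e1, mul_assoc]
  · refine Or.inr ⟨s1 * w * s3, (hB.2 s1 hs1 s3 hs3).2 w, ?_⟩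
    rw [e3, hw, e1]
    simp only [mul_assoc]

/-- Main combinatorial lemma: a strict `R_B`-chain of length `m ≥ 1` inside `B`
yields a strict `R_S`-chain with representatives in `B` of length `k` with
`m + 2 ≤ 3k`, all of whose members lie `R_S`-below the top of the original chain. -/
lemma main_chain {K B : Set S} (hK : IsKernel K) (hCS : IsCompletelySimple K)
    (hB : IsBiIdeal B) :
    ∀ m : ℕ, ∀ F : ℕ → S, 1 ≤ m → (∀ i < m, F i ∈ B) →
      (∀ i j, i < j → j < m → RLt B (F i) (F j)) →
      ∃ k : ℕ, ∃ G : ℕ → S, 1 ≤ k ∧ m + 2 ≤ 3 * k ∧ (∀ i < k, G i ∈ B) ∧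
        (∀ i j, i < j → j < k → RLt (Set.univ : Set S) (G i) (G j)) ∧
        (∀ i < k, RLe (Set.univ : Set S) (G i) (F (m - 1))) := by
  intro m
  induction m using Nat.strong_induction_on with
  | _ m IH =>
    intro F hm hFB hFc
    have chainle : ∀ i j, i ≤ j → j < m → RLe (Set.univ : Set S) (F i) (F j) := by
      intro i j hij hj
      rcases eq_or_lt_of_le hij with rfl | h
      · exact Or.inl rfl
      · exact rle_of_rleB (hFc i j h hj).1
    rcases Nat.lt_or_ge m 4 with h4 | h4
    · interval_cases m
      · -- m = 1
        refine ⟨1, fun _ => F 0, le_refl 1, by omega, ?_, ?_, ?_⟩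
        · intro i _; exact hFB 0 (by omega)
        · intro i j hij hj; omega
        · intro i _; exact Or.inl rfl
      · -- m = 2
        by_cases he : RLe (Set.univ : Set S) (F 1) (F 0)
        · obtain ⟨c, hcB, hclt⟩ := below_of_within hK hCS hB (hFB 0 (by omega))
            (hFB 1 (by omega)) (hFc 0 1 (by omega) (by omega)) he
          refine ⟨2, fun i => if i = 0 then c else F 0, by omega, by omega, ?_, ?_, ?_⟩
          · intro i hi
            by_cases h0 : i = 0 <;> simp [h0]
            exacts [hcB, hFB 0 (by omega)]
          · intro i j hij hj
            have hi0 : i = 0 := by omega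
            have hj1 : j = 1 := by omega
            subst hi0; subst hj1
            simpa using hclt
          · intro i hi
            by_cases h0 : i = 0 <;> simp [h0]
            · exact rle_univ_trans hclt.1 (chainle 0 1 (by omega) (by omega))
            · exact chainle 0 1 (by omega) (by omega)
        · refine ⟨2, fun i => if i = 0 then F 0 else F 1, by omega, by omega, ?_, ?_, ?_⟩
          · intro i hi
            by_cases h0 : i = 0 <;> simp [h0]
            exacts [hFB 0 (by omega), hFB 1 (by omega)]
          · intro i j hij hj
            have hi0 : i = 0 := by omega
            have hj1 : j = 1 := by omega
            subst hi0; subst hj1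
            simpa using ⟨chainle 0 1 (by omega) (by omega), he⟩
          · intro i hi
            by_cases h0 : i = 0 <;> simp [h0]
            · exact chainle 0 1 (by omega) (by omega)
            · exact Or.inl rfl
      · -- m = 3
        by_cases he : RLe (Set.univ : Set S) (F 1) (F 0)
        · obtain ⟨c, hcB, hclt⟩ := below_of_within hK hCS hB (hFB 0 (by omega))
            (hFB 1 (by omega)) (hFc 0 1 (by omega) (by omega)) he
          refine ⟨2, fun i => if i = 0 then c else F 2, by omega, by omega, ?_, ?_, ?_⟩
          · intro i hi
            by_cases h0 : i = 0 <;> simp [h0]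
            exacts [hcB, hFB 2 (by omega)]
          · intro i j hij hj
            have hi0 : i = 0 := by omega
            have hj1 : j = 1 := by omega
            subst hi0; subst hj1
            simp only [if_pos rfl, if_neg one_ne_zero]
            refine ⟨rle_univ_trans hclt.1 (chainle 0 2 (by omega) (by omega)), ?_⟩
            intro hcon
            exact hclt.2 (rle_univ_trans (chainle 0 2 (by omega) (by omega)) hcon)
          · intro i hi
            by_cases h0 : i = 0 <;> simp [h0]
            · exact rle_univ_trans hclt.1 (chainle 0 2 (by omega) (by omega))
            · exact Or.inl rfl
        · refine ⟨2, fun i => if i = 0 then F 0 else F 2, by omega, by omega, ?_, ?_, ?_⟩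
          · intro i hi
            by_cases h0 : i = 0 <;> simp [h0]
            exacts [hFB 0 (by omega), hFB 2 (by omega)]
          · intro i j hij hj
            have hi0 : i = 0 := by omega
            have hj1 : j = 1 := by omega
            subst hi0; subst hj1
            simp only [if_pos rfl, if_neg one_ne_zero]
            refine ⟨chainle 0 2 (by omega) (by omega), ?_⟩
            intro hcon
            exact he (rle_univ_trans (chainle 1 2 (by omega) (by omega)) hcon)
          · intro i hi
            by_cases h0 : i = 0 <;> simp [h0]
            · exact chainle 0 2 (by omega) (by omega)
            · exact Or.inl rfl
    · -- m ≥ 4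
      obtain ⟨a, rfl⟩ : ∃ a, m = a + 4 := ⟨m - 4, by omega⟩
      have hne : ¬ RLe (Set.univ : Set S) (F (a + 3)) (F a) := by
        intro hcon
        have h01 := hFc a (a + 1) (by omega) (by omega)
        have h23 := hFc (a + 2) (a + 3) (by omega) (by omega)
        have h12 := hFc (a + 1) (a + 2) (by omega) (by omega)
        rcases h01.1 with heq | ⟨s1, hs1, e1⟩
        · exact h01.2 (Or.inl heq.symm)
        rcases h23.1 with heq | ⟨s3, hs3, e3⟩
        · exact h23.2 (Or.inl heq.symm)
        exact h12.2 (rle_of_four hB hs1 hs3 e1 e3 hcon)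
      obtain ⟨k, G, hk1, hbd, hGB, hGc, hGtop⟩ := IH (a + 1) (by omega) F (by omega)
        (fun i hi => hFB i (by omega)) (fun i j hij hj => hFc i j hij (by omega))
      have htopa : ∀ i < k, RLe (Set.univ : Set S) (G i) (F a) := by
        intro i hi
        simpa using hGtop i hi
      refine ⟨k + 1, fun i => if i < k then G i else F (a + 3), by omega, by omega,
        ?_, ?_, ?_⟩
      · intro i hi
        by_cases h0 : i < k <;> simp [h0]
        · exact hGB i h0
        · exact hFB (a + 3) (by omega)
      · intro i j hij hj
        by_cases hjk : j < k
        · have hik : i < k := by omega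
          simp only [if_pos hik, if_pos hjk]
          exact hGc i j hij hjk
        · have hik : i < k := by omega
          simp only [if_pos hik, if_neg hjk]
          refine ⟨rle_univ_trans (htopa i hik)
            (chainle a (a + 3) (by omega) (by omega)), ?_⟩
          intro hcon
          exact hne (rle_univ_trans hcon (htopa i hik))
      · intro i hi
        have hgoal : a + 4 - 1 = a + 3 := by omega
        rw [hgoal]
        by_cases h0 : i < k <;> simp [h0]
        · exact rle_univ_trans (htopa i h0) (chainle a (a + 3) (by omega) (by omega))
        · exact Or.inl rfl

end AuxLemmas

/-- If `S` has finite `R`-height and completely simple kernel, and `B`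
is a bi-ideal of `S`, then `H_R(B) ≤ 3n - 2`, where `n` is the maximum length of a
chain of `R_S`-classes that intersect `B`. -/
theorem biideal_rheight_le_of_completely_simple_kernel {S : Type*} [Semigroup S]
    (hfin : RHeight (Set.univ : Set S) ≠ ⊤)
    {K : Set S} (hK : IsKernel K) (hCS : IsCompletelySimple K)
    {B : Set S} (hB : IsBiIdeal B) (n : ℕ)
    (hchain : HasRChain (Set.univ : Set S) B n)
    (hmax : ∀ m : ℕ, HasRChain (Set.univ : Set S) B m → m ≤ n) :
    RHeight B ≤ ((3 * n - 2 : ℕ) : ℕ∞) := by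
  have hn1 : 1 ≤ n := by
    obtain ⟨b, hb⟩ := hB.1
    refine hmax 1 ⟨fun _ => b, fun _ => hb, ?_⟩
    intro i j hij
    exact absurd (Fin.lt_iff_val_lt_val.mp hij)
      (by have := i.isLt; have := j.isLt; omega)
  unfold RHeight
  refine sSup_le ?_
  rintro x ⟨m, hm, rfl⟩
  show ((m : ℕ)) ≤ ((3 * n - 2 : ℕ) : ℕ∞)
  have hfinal : m ≤ 3 * n - 2 := by
    rcases Nat.eq_zero_or_pos m with rfl | hm1
    · exact Nat.zero_le _
    obtain ⟨f, hfB, hfc⟩ := hm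
    set F : ℕ → S := fun i => f ⟨min i (m - 1), by omega⟩ with hFdef
    have hFB : ∀ i < m, F i ∈ B := fun i _ => hfB _
    have hFc : ∀ i j, i < j → j < m → RLt B (F i) (F j) := by
      intro i j hij hj
      apply hfc
      rw [Fin.lt_iff_val_lt_val]
      show min i (m - 1) < min j (m - 1)
      omega
    obtain ⟨k, G, hk1, hbd, hGB, hGc, -⟩ := main_chain hK hCS hB m F hm1 hFB hFc
    have hkn : k ≤ n := by
      refine hmax k ⟨fun i => G i.1, fun i => hGB i.1 i.isLt, ?_⟩
      intro i j hij
      exact hGc i.1 j.1 (Fin.lt_iff_val_lt_val.mp hij) j.isLt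
    omega
  exact_mod_cast hfinal
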